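/- Let p > 1. Then the negative-order moments of the free Poisson distribution fp(p) satisfy m_{−1}(fp(p)) = ∫ x^{−1} dfp(p)(x) = 1/(p−1) and m_{−2}(fp(p)) = ∫ x^{−2} dfp(p)(x) = p/(p−1)³. -/

import Mathlib

/-!
On the support `(a, b)`, `a = (√p - 1)²`, `b = (√p + 1)²`, the two moments are `(2π)⁻¹` times
`∫ₐᵇ √((b - x)(x - a)) / xᵏ dx` for `k = 2, 3`. Both integrals have elementary primitives:
combinations of `√((b - x)(x - a)) / xⁿ`, which vanish at both ends, and of `arcsin` composed
with the Möbius maps `x ↦ (2x - (a + b)) / (b - a)` and `x ↦ ((a + b)x - 2ab) / ((b - a)x)`,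
whose derivatives are `1 / √((b - x)(x - a))` and `√(ab) / (x √((b - x)(x - a)))`. Both maps
send `a ↦ -1` and `b ↦ 1`, so each `arcsin` contributes a multiple of `π`. Finally `√(ab) = p - 1`.
-/

open MeasureTheory Set

/-- Density of the free Poisson (Marchenko–Pastur) distribution `fp(p)` for `p > 1`:
`√(((√p+1)² - x)(x - (√p-1)²))/(2πx)` on `((√p-1)², (√p+1)²)`. -/
noncomputable def fpDensity (p : ℝ) (x : ℝ) : ℝ :=
  Real.sqrt (((Real.sqrt p + 1) ^ 2 - x) * (x - (Real.sqrt p - 1) ^ 2)) / (2 * Real.pi * x)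

/-- The free Poisson (Marchenko–Pastur) distribution `fp(p)` for `p > 1`. -/
noncomputable def fpMeasure (p : ℝ) : Measure ℝ :=
  MeasureTheory.volume.withDensity
    (fun x => ENNReal.ofReal
      ((Set.Ioo ((Real.sqrt p - 1) ^ 2) ((Real.sqrt p + 1) ^ 2)).indicator (fpDensity p) x))

open Real intervalIntegral

section SqrtQuadratic

variable {a b x : ℝ}

lemma mul_sub_pos_of_mem_Ioo (hx : x ∈ Ioo a b) : 0 < (b - x) * (x - a) :=
  mul_pos (sub_pos.2 hx.2) (sub_pos.2 hx.1)

lemma hasDerivAt_sqrt_mul_sub_div_pow (n : ℕ) (hx : x ∈ Ioo a b) (hx0 : x ≠ 0) :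
    HasDerivAt (fun y => √((b - y) * (y - a)) / y ^ n)
      (((a + b - 2 * x) * x - 2 * n * ((b - x) * (x - a))) /
        (2 * x ^ (n + 1) * √((b - x) * (x - a)))) x := by
  have hq := mul_sub_pos_of_mem_Ioo hx
  have hS : HasDerivAt (fun y => √((b - y) * (y - a)))
      ((a + b - 2 * x) / (2 * √((b - x) * (x - a)))) x := by
    have hq' : HasDerivAt (fun y => (b - y) * (y - a)) (-1 * (x - a) + (b - x) * 1) x :=
      ((hasDerivAt_id' x).const_sub b).mul ((hasDerivAt_id' x).sub_const a)
    exact (hq'.sqrt hq.ne').congr_deriv (by ring)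
  refine (hS.div (hasDerivAt_pow n x) (pow_ne_zero n hx0)).congr_deriv ?_
  have hS0 : 0 < √((b - x) * (x - a)) := sqrt_pos.2 hq
  have hS2 : √((b - x) * (x - a)) ^ 2 = (b - x) * (x - a) := sq_sqrt hq.le
  set S := √((b - x) * (x - a))
  rw [← hS2]
  rcases n with _ | n
  · field_simp; ring
  · simp only [Nat.add_sub_cancel]
    field_simp
    ring

lemma hasDerivAt_arcsin_of_one_sub_sq_eq {g : ℝ → ℝ} {g' c q : ℝ} (hg : HasDerivAt g g' x)
    (hc : 0 < c) (hq : 0 < q) (h : 1 - g x ^ 2 = c ^ 2 * q) :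
    HasDerivAt (fun y => arcsin (g y)) (g' / (c * √q)) x := by
  have hlt : 0 < 1 - g x ^ 2 := h ▸ by positivity
  have h₁ : g x ≠ -1 := by rintro hg1; rw [hg1] at hlt; norm_num at hlt
  have h₂ : g x ≠ 1 := by rintro hg1; rw [hg1] at hlt; norm_num at hlt
  refine ((hasDerivAt_arcsin h₁ h₂).comp x hg).congr_deriv ?_
  rw [h, sqrt_mul (sq_nonneg c), sqrt_sq hc.le]
  ring

lemma hasDerivAt_arcsin_affine (hx : x ∈ Ioo a b) :
    HasDerivAt (fun y => arcsin ((2 * y - (a + b)) / (b - a)))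
      (1 / √((b - x) * (x - a))) x := by
  have hba : 0 < b - a := sub_pos.2 (hx.1.trans hx.2)
  have hg : HasDerivAt (fun y => (2 * y - (a + b)) / (b - a)) (2 / (b - a)) x := by
    simpa using (((hasDerivAt_id x).const_mul 2).sub_const (a + b)).div_const (b - a)
  refine (hasDerivAt_arcsin_of_one_sub_sq_eq hg (div_pos two_pos hba)
    (mul_sub_pos_of_mem_Ioo hx) ?_).congr_deriv ?_
  · field_simp; ring
  · field_simp

lemma hasDerivAt_arcsin_mobius (ha : 0 < a) (hx : x ∈ Ioo a b) :
    HasDerivAt (fun y => arcsin (((a + b) * y - 2 * (a * b)) / ((b - a) * y)))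
      (√(a * b) / (x * √((b - x) * (x - a)))) x := by
  have hba : 0 < b - a := sub_pos.2 (hx.1.trans hx.2)
  have hx0 : 0 < x := ha.trans hx.1
  have hab : 0 < a * b := mul_pos ha (ha.trans (hx.1.trans hx.2))
  have hW : 0 < √(a * b) := sqrt_pos.2 hab
  have hW2 : √(a * b) ^ 2 = a * b := sq_sqrt hab.le
  have hg : HasDerivAt (fun y => ((a + b) * y - 2 * (a * b)) / ((b - a) * y))
      (2 * (a * b) / ((b - a) * x ^ 2)) x := by
    refine ((((hasDerivAt_id' x).const_mul (a + b)).sub_const (2 * (a * b))).div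
      ((hasDerivAt_id' x).const_mul (b - a)) (by positivity)).congr_deriv ?_
    field_simp; ring
  refine (hasDerivAt_arcsin_of_one_sub_sq_eq hg (c := 2 * √(a * b) / ((b - a) * x))
    (by positivity) (mul_sub_pos_of_mem_Ioo hx) ?_).congr_deriv ?_
  · field_simp; rw [hW2]; ring
  · field_simp; rw [hW2]

noncomputable def arcsinSqrtCombination (a b α β γ δ y : ℝ) : ℝ :=
  α * arcsin (((a + b) * y - 2 * (a * b)) / ((b - a) * y)) +
    β * arcsin ((2 * y - (a + b)) / (b - a)) +
    γ * (√((b - y) * (y - a)) / y) + δ * (√((b - y) * (y - a)) / y ^ 2)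

lemma hasDerivAt_arcsinSqrtCombination (ha : 0 < a) (hx : x ∈ Ioo a b) (α β γ δ : ℝ) :
    HasDerivAt (arcsinSqrtCombination a b α β γ δ)
      (α * (√(a * b) / (x * √((b - x) * (x - a)))) + β * (1 / √((b - x) * (x - a))) +
        γ * (((a + b - 2 * x) * x - 2 * ((b - x) * (x - a))) /
          (2 * x ^ 2 * √((b - x) * (x - a)))) +
        δ * (((a + b - 2 * x) * x - 4 * ((b - x) * (x - a))) /
          (2 * x ^ 3 * √((b - x) * (x - a))))) x := by
  have hx0 : x ≠ 0 := (ha.trans hx.1).ne'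
  have h1 := hasDerivAt_sqrt_mul_sub_div_pow 1 hx hx0
  have h2 := hasDerivAt_sqrt_mul_sub_div_pow 2 hx hx0
  norm_num at h1 h2
  exact (((hasDerivAt_arcsin_mobius ha hx).const_mul α).add
    ((hasDerivAt_arcsin_affine hx).const_mul β)).add (h1.const_mul γ) |>.add (h2.const_mul δ)

lemma continuousOn_sqrt_mul_sub_div_pow (ha : 0 < a) (n : ℕ) :
    ContinuousOn (fun x => √((b - x) * (x - a)) / x ^ n) (Icc a b) :=
  continuousOn_of_forall_continuousAt fun x hx => by
    have := pow_ne_zero n (ha.trans_le hx.1).ne'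
    fun_prop (disch := assumption)

lemma integral_eq_of_hasDerivAt_arcsinSqrtCombination (ha : 0 < a) (hab : a < b) {f : ℝ → ℝ}
    {α β γ δ : ℝ} (hf : ContinuousOn f (Icc a b))
    (hderiv : ∀ x ∈ Ioo a b, HasDerivAt (arcsinSqrtCombination a b α β γ δ) (f x) x) :
    ∫ x in a..b, f x = (α + β) * π := by
  have hba : b - a ≠ 0 := (sub_pos.2 hab).ne'
  have hcont : ContinuousOn (arcsinSqrtCombination a b α β γ δ) (Icc a b) := by
    refine continuousOn_of_forall_continuousAt fun y hy => ?_
    have hy0 : y ≠ 0 := (ha.trans_le hy.1).ne'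
    have hy1 : (b - a) * y ≠ 0 := mul_ne_zero hba hy0
    have hy2 : y ^ 2 ≠ 0 := pow_ne_zero 2 hy0
    unfold arcsinSqrtCombination
    fun_prop (disch := assumption)
  have hMa : ((a + b) * a - 2 * (a * b)) / ((b - a) * a) = -1 := by
    field_simp; ring
  have hMb : ((a + b) * b - 2 * (a * b)) / ((b - a) * b) = 1 := by
    have := (ha.trans hab).ne'
    field_simp; ring
  have hLa : (2 * a - (a + b)) / (b - a) = -1 := by field_simp; ring
  have hLb : (2 * b - (a + b)) / (b - a) = 1 := by field_simp; ring
  rw [integral_eq_sub_of_hasDerivAt_of_le hab.le hcont hderiv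
    (hf.intervalIntegrable_of_Icc hab.le)]
  simp only [arcsinSqrtCombination, hMa, hMb, hLa, hLb, arcsin_one, arcsin_neg_one, sub_self, zero_mul, mul_zero,
    sqrt_zero, zero_div]
  ring

lemma integral_sqrt_mul_sub_div_sq (ha : 0 < a) (hab : a < b) :
    ∫ x in a..b, √((b - x) * (x - a)) / x ^ 2 = ((a + b) / (2 * √(a * b)) - 1) * π := by
  have hW : 0 < √(a * b) := sqrt_pos.2 (mul_pos ha (ha.trans hab))
  refine integral_eq_of_hasDerivAt_arcsinSqrtCombination ha hab (δ := 0) (γ := -1)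
    (continuousOn_sqrt_mul_sub_div_pow ha 2) fun x hx => ?_
  have hq := mul_sub_pos_of_mem_Ioo hx
  have hS0 : 0 < √((b - x) * (x - a)) := sqrt_pos.2 hq
  have hS2 : √((b - x) * (x - a)) ^ 2 = (b - x) * (x - a) := sq_sqrt hq.le
  have hx0 : x ≠ 0 := (ha.trans hx.1).ne'
  refine (hasDerivAt_arcsinSqrtCombination ha hx _ _ _ _).congr_deriv ?_
  set W := √(a * b)
  field_simp
  rw [hS2]
  ring

lemma integral_sqrt_mul_sub_div_cube (ha : 0 < a) (hab : a < b) :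
    ∫ x in a..b, √((b - x) * (x - a)) / x ^ 3 = (b - a) ^ 2 / (8 * (a * b) * √(a * b)) * π := by
  have hW : 0 < √(a * b) := sqrt_pos.2 (mul_pos ha (ha.trans hab))
  have ha0 : a ≠ 0 := ha.ne'
  have hb0 : b ≠ 0 := (ha.trans hab).ne'
  rw [← add_zero ((b - a) ^ 2 / (8 * (a * b) * √(a * b)))]
  refine integral_eq_of_hasDerivAt_arcsinSqrtCombination ha hab (γ := (a + b) / (4 * (a * b)))
    (δ := -1 / 2) (continuousOn_sqrt_mul_sub_div_pow ha 3) fun x hx => ?_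
  have hq := mul_sub_pos_of_mem_Ioo hx
  have hS0 : 0 < √((b - x) * (x - a)) := sqrt_pos.2 hq
  have hS2 : √((b - x) * (x - a)) ^ 2 = (b - x) * (x - a) := sq_sqrt hq.le
  have hx0 : x ≠ 0 := (ha.trans hx.1).ne'
  refine (hasDerivAt_arcsinSqrtCombination ha hx _ _ _ _).congr_deriv ?_
  set W := √(a * b)
  field_simp
  rw [hS2]
  ring

end SqrtQuadratic

lemma integral_withDensity_ofReal_indicator_Ioo {E : Type*} [NormedAddCommGroup E]
    [NormedSpace ℝ E] {a b : ℝ} (hab : a ≤ b) {f : ℝ → ℝ} (hf : Measurable f)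
    (hf0 : ∀ x ∈ Ioo a b, 0 ≤ f x) (g : ℝ → E) :
    ∫ x, g x ∂volume.withDensity (fun x => ENNReal.ofReal ((Ioo a b).indicator f x)) =
      ∫ x in a..b, f x • g x := by
  rw [integral_withDensity_eq_integral_toReal_smul (hf.indicator measurableSet_Ioo).ennreal_ofReal
    (ae_of_all _ fun _ => ENNReal.ofReal_lt_top), integral_of_le hab,
    integral_Ioc_eq_integral_Ioo, ← MeasureTheory.integral_indicator measurableSet_Ioo]
  congr 1 with x
  rw [ENNReal.toReal_ofReal (indicator_nonneg hf0 x), indicator_smul_apply_left]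

lemma measurable_fpDensity (p : ℝ) : Measurable (fpDensity p) := by
  unfold fpDensity
  fun_prop

lemma fpDensity_nonneg (p : ℝ) {x : ℝ} (hx : 0 ≤ x) : 0 ≤ fpDensity p x :=
  div_nonneg (sqrt_nonneg _) (by positivity)

lemma integral_zpow_neg_fpMeasure {p : ℝ} (hp : 1 < p) (n : ℕ) :
    ∫ x, x ^ (-n : ℤ) ∂fpMeasure p = (2 * π)⁻¹ * ∫ x in (√p - 1) ^ 2..(√p + 1) ^ 2,
      √(((√p + 1) ^ 2 - x) * (x - (√p - 1) ^ 2)) / x ^ (n + 1) := by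
  have ha : 0 < (√p - 1) ^ 2 := pow_pos (sub_pos.2 (by rw [← sqrt_one]; gcongr)) 2
  have hab : (√p - 1) ^ 2 ≤ (√p + 1) ^ 2 := by nlinarith [sqrt_nonneg p]
  rw [fpMeasure, integral_withDensity_ofReal_indicator_Ioo hab (measurable_fpDensity p)
    fun x hx => fpDensity_nonneg p (ha.trans hx.1).le, ← intervalIntegral.integral_const_mul]
  refine integral_congr fun x hx => ?_
  have hx0 : x ≠ 0 := (ha.trans_le (uIcc_of_le hab ▸ hx).1).ne'
  rw [fpDensity, zpow_neg, zpow_natCast, smul_eq_mul]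
  field_simp
  ring

/-- For `p > 1`, the negative-order moments of `fp(p)` satisfy
`m_{-1}(fp(p)) = 1/(p-1)` and `m_{-2}(fp(p)) = p/(p-1)³`. -/
theorem fp_negative_moments (p : ℝ) (hp : 1 < p) :
    (∫ x : ℝ, x ^ (-1 : ℤ) ∂(fpMeasure p)) = 1 / (p - 1) ∧
    (∫ x : ℝ, x ^ (-2 : ℤ) ∂(fpMeasure p)) = p / (p - 1) ^ 3 := by
  have h1 := integral_zpow_neg_fpMeasure hp 1
  have h2 := integral_zpow_neg_fpMeasure hp 2
  push_cast at h1 h2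
  rw [h1, h2]
  obtain ⟨r, hr, rfl⟩ : ∃ r, 1 < r ∧ p = r ^ 2 :=
    ⟨√p, by rw [← sqrt_one]; gcongr, (sq_sqrt (by linarith)).symm⟩
  have ha : 0 < (r - 1) ^ 2 := pow_pos (sub_pos.2 hr) 2
  have hab : (r - 1) ^ 2 < (r + 1) ^ 2 := by nlinarith
  have hW : √((r - 1) ^ 2 * (r + 1) ^ 2) = r ^ 2 - 1 := by
    rw [← mul_pow, sqrt_sq (by nlinarith)]
    ring
  rw [sqrt_sq (by linarith), integral_sqrt_mul_sub_div_sq ha hab,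
    integral_sqrt_mul_sub_div_cube ha hab, hW]
  have : r - 1 ≠ 0 := by linarith
  have : r + 1 ≠ 0 := by linarith
  have : r ^ 2 - 1 ≠ 0 := by nlinarith
  constructor
  · field_simp
    ring
  · field_simp
    ring
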